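/- arXiv:1405.0548 — 3 statements merged into one kernel-verified Lean document; each statement's English description precedes it below -/
import Mathlib

section
/- Let K be a field and define for a,b ∈ K the matrices M_x(a,b) = [[a,1],[0,b]] and M_y(a,b) = [[b,0],[1,a]]. For a, b₁,…,b_k, b ∈ K let λ' = (1, a) · M_x(b₁,b₂) · M_x(b₂,b₃) ⋯ M_x(b_{k−1},b_k) · M_y(b_k,b) and λ = (1, b_k). Then the determinant of the 2×2 matrix with first row λ' and second row λ equals b₁b₂⋯b_k·b. -/
/-!
`M_x(p, q)` is upper triangular, so right multiplication by it scales the first coordinate of a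
row vector by `p`; hence the first entry of `λ'` before the final `M_y` is `b₁ ⋯ b_{k-1}`.
Writing `(u, w)` for that row vector, `λ' = (u b + w, w b_k)`, and the `w`-terms cancel in
the determinant against `(1, b_k)`, leaving `u b_k b`.
-/

def Mx {K : Type*} [Field K] (a b : K) : Matrix (Fin 2) (Fin 2) K := !![a, 1; 0, b]
def My {K : Type*} [Field K] (a b : K) : Matrix (Fin 2) (Fin 2) K := !![b, 0; 1, a]

section

variable {K : Type*} [Field K]

theorem mul_Mx_apply_zero_zero (v : Matrix (Fin 1) (Fin 2) K) (p q : K) :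
    (v * Mx p q) 0 0 = v 0 0 * p := by
  simp [Mx, Matrix.mul_apply, Fin.sum_univ_two]

theorem mul_prod_map_Mx_apply_zero_zero (v : Matrix (Fin 1) (Fin 2) K) (f g : ℕ → K) (n : ℕ) :
    (v * ((List.range n).map fun i => Mx (f i) (g i)).prod) 0 0 =
      v 0 0 * ∏ i ∈ Finset.range n, f i := by
  induction n with
  | zero => simp
  | succ n ih =>
    rw [List.range_succ, List.map_append, List.prod_append, List.map_singleton, List.prod_singleton,
      ← Matrix.mul_assoc, mul_Mx_apply_zero_zero, ih, Finset.prod_range_succ, mul_assoc]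

theorem det_mul_My_of_row (v : Matrix (Fin 1) (Fin 2) K) (c d : K) :
    Matrix.det !![(v * My c d) 0 0, (v * My c d) 0 1; 1, c] = v 0 0 * c * d := by
  simp only [My, Matrix.mul_apply, Fin.sum_univ_two, Matrix.of_apply, Matrix.cons_val',
    Matrix.cons_val_zero, Matrix.cons_val_one, Matrix.cons_val_fin_one, Matrix.det_fin_two_of,
    mul_one, mul_zero, zero_add]
  ring

end

theorem stmt_1 (K : Type*) [Field K] (k : ℕ) (hk : 1 ≤ k)
    (a b' : K) (b : ℕ → K)
    (lam' : Matrix (Fin 1) (Fin 2) K)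
    (hlam' : lam' =
      !![1, a] * (((List.range (k - 1)).map fun i => Mx (b (i + 1)) (b (i + 2))).prod)
        * My (b k) b') :
    Matrix.det !![lam' 0 0, lam' 0 1; 1, b k] =
      (∏ i ∈ Finset.Icc 1 k, b i) * b' := by
  obtain ⟨n, rfl⟩ := Nat.exists_eq_add_of_le' hk
  subst hlam'
  rw [det_mul_My_of_row, mul_prod_map_Mx_apply_zero_zero, Nat.add_sub_cancel,
    Finset.prod_Icc_succ_top (by omega), Finset.range_eq_Ico, Finset.prod_Ico_add' b 0 n 1,
    zero_add, Finset.Ico_add_one_right_eq_Icc]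
  simp
end

section
/- Let K be a field, with matrices M_x(a,b) = [[a,1],[0,b]] and M_y(a,b) = [[b,0],[1,a]]. Let A be a 2×2 matrix over K, and let a, b₁,…,b_k, b, c, c₁,…,c_l, d ∈ K with k, l ≥ 1. Define p = (1, b_k)·A·(1, c₁)ᵀ, q = (1, b_k)·A·M_x(c,c₁)·M_y(c₁,c₂)⋯M_y(c_{l−1},c_l)·(1,d)ᵀ, r = (1,a)·M_x(b₁,b₂)⋯M_x(b_{k−1},b_k)·M_y(b_k,b)·A·(1,c₁)ᵀ, and s = (1,a)·M_x(b₁,b₂)⋯M_x(b_{k−1},b_k)·M_y(b_k,b)·A·M_x(c,c₁)·M_y(c₁,c₂)⋯M_y(c_{l−1},c_l)·(1,d)ᵀ. Then ps − qr = b₁⋯b_k · b · c · c₁⋯c_l · det A. -/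
open Matrix Finset

namespace Matrix

variable {R : Type*} [CommRing R]

def stackRows (u v : Matrix (Fin 1) (Fin 2) R) : Matrix (Fin 2) (Fin 2) R :=
  of ![u 0, v 0]

def stackCols (w z : Matrix (Fin 2) (Fin 1) R) : Matrix (Fin 2) (Fin 2) R :=
  of fun i => ![w i 0, z i 0]

theorem stackRows_mul (u v : Matrix (Fin 1) (Fin 2) R) (M : Matrix (Fin 2) (Fin 2) R) :
    stackRows (u * M) (v * M) = stackRows u v * M := by
  ext i j
  fin_cases i <;> simp [stackRows, mul_apply]

theorem mul_stackCols (M : Matrix (Fin 2) (Fin 2) R) (w z : Matrix (Fin 2) (Fin 1) R) :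
    stackCols (M * w) (M * z) = M * stackCols w z := by
  ext i j
  fin_cases j <;> simp [stackCols, mul_apply]

theorem det_stackRows_mul_mul_stackCols (u v : Matrix (Fin 1) (Fin 2) R)
    (A : Matrix (Fin 2) (Fin 2) R) (w z : Matrix (Fin 2) (Fin 1) R) :
    (stackRows u v * A * stackCols w z).det =
      (u * A * w) 0 0 * (v * A * z) 0 0 - (u * A * z) 0 0 * (v * A * w) 0 0 := by
  simp [det_fin_two, stackRows, stackCols, mul_apply, vecMul, dotProduct, Fin.sum_univ_two]
  ring

theorem det_stackRows_zero_one (v : Matrix (Fin 1) (Fin 2) R) :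
    (stackRows !![0, 1] v).det = -v 0 0 := by
  simp [det_fin_two, stackRows]

theorem det_stackCols_zero_one (z : Matrix (Fin 2) (Fin 1) R) :
    (stackCols !![0; 1] z).det = -z 0 0 := by
  simp [det_fin_two, stackCols]

theorem mul_list_prod_apply_zero_zero (r : Matrix (Fin 1) (Fin 2) R)
    (f : ℕ → Matrix (Fin 2) (Fin 2) R) (hf : ∀ i, f i 1 0 = 0) (n : ℕ) :
    (r * ((List.range n).map f).prod) 0 0 = r 0 0 * ∏ i ∈ range n, f i 0 0 := by
  induction n with
  | zero => simp
  | succ n ih =>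
    simp only [List.range_succ, List.map_append, List.map_singleton, List.prod_append,
      List.prod_singleton, ← Matrix.mul_assoc, prod_range_succ]
    have hstep (x : Matrix (Fin 1) (Fin 2) R) : (x * f n) 0 0 = x 0 0 * f n 0 0 := by
      simp [mul_apply, Fin.sum_univ_two, hf]
    rw [hstep, ih, mul_assoc]

theorem list_prod_mul_apply_zero_zero (f : ℕ → Matrix (Fin 2) (Fin 2) R)
    (hf : ∀ i, f i 0 1 = 0) (n : ℕ) (w : Matrix (Fin 2) (Fin 1) R) :
    (((List.range n).map f).prod * w) 0 0 = (∏ i ∈ range n, f i 0 0) * w 0 0 := by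
  induction n generalizing w with
  | zero => simp
  | succ n ih =>
    simp only [List.range_succ, List.map_append, List.map_singleton, List.prod_append,
      List.prod_singleton, Matrix.mul_assoc, prod_range_succ, ih]
    simp [mul_apply, Fin.sum_univ_two, hf, mul_assoc]

end Matrix

theorem Finset.prod_Icc_one_eq_prod_range {M : Type*} [CommMonoid M] (f : ℕ → M) (n : ℕ) :
    ∏ i ∈ Icc 1 n, f i = ∏ i ∈ range n, f (i + 1) := by
  rw [← Ico_add_one_right_eq_Icc, prod_Ico_eq_prod_range]
  simp [add_comm]

theorem stmt_4 (K : Type*) [Field K] (k l : ℕ) (hk : 1 ≤ k) (hl : 1 ≤ l)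
    (A : Matrix (Fin 2) (Fin 2) K)
    (a b' c' d : K) (b c : ℕ → K)
    (Px Qy : Matrix (Fin 2) (Fin 2) K)
    (hPx : Px = ((List.range (k - 1)).map fun i => Mx (b (i + 1)) (b (i + 2))).prod)
    (hQy : Qy = Mx c' (c 1) *
      ((List.range (l - 1)).map fun i => My (c (i + 1)) (c (i + 2))).prod)
    (p q r s : K)
    (hp : p = (!![1, b k] * A * !![(1 : K); c 1]) 0 0)
    (hq : q = (!![1, b k] * A * Qy * !![(1 : K); d]) 0 0)
    (hr : r = (!![1, a] * Px * My (b k) b' * A * !![(1 : K); c 1]) 0 0)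
    (hs : s = (!![1, a] * Px * My (b k) b' * A * Qy * !![(1 : K); d]) 0 0) :
    p * s - q * r =
      (∏ i ∈ Finset.Icc 1 k, b i) * b' * c' * (∏ i ∈ Finset.Icc 1 l, c i) * A.det := by
  obtain ⟨m, rfl⟩ : ∃ m, k = m + 1 := ⟨k - 1, by omega⟩
  obtain ⟨n, rfl⟩ : ∃ n, l = n + 1 := ⟨l - 1, by omega⟩
  simp only [Nat.add_sub_cancel] at hPx hQy
  have hrow : !![1, b (m + 1)] = !![(0 : K), 1] * My (b (m + 1)) b' := by
    ext i j; fin_cases j <;> simp [My]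
  have hcol : !![(1 : K); c 1] = Mx c' (c 1) * !![(0 : K); 1] := by
    ext i j; fin_cases i <;> simp [Mx]
  have hPx₀₀ : (!![(1 : K), a] * Px) 0 0 = ∏ i ∈ range m, b (i + 1) := by
    rw [hPx, mul_list_prod_apply_zero_zero _ _ (fun _ => rfl)]; simp [Mx]
  have hQy₀₀ :
      (((List.range n).map fun i => My (c (i + 1)) (c (i + 2))).prod * !![(1 : K); d]) 0 0 =
        ∏ i ∈ range n, c (i + 2) := by
    rw [list_prod_mul_apply_zero_zero _ (fun _ => rfl)]; simp [My]
  rw [hp, hq, hr, hs, Matrix.mul_assoc _ Qy, Matrix.mul_assoc _ Qy, hQy,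
    Matrix.mul_assoc (Mx c' (c 1)), hrow, hcol, ← det_stackRows_mul_mul_stackCols]
  simp only [stackRows_mul, mul_stackCols, det_mul, det_stackRows_zero_one, det_stackCols_zero_one,
    hPx₀₀, hQy₀₀, prod_Icc_one_eq_prod_range]
  rw [prod_range_succ (fun i => b (i + 1)), prod_range_succ' (fun i => c (i + 1))]
  simp [Mx, My, det_fin_two]
  ring
end

section
/- Let K be a field with elements a, b₁,…,b_{k−1}, b_k, c₁,…,c_l, d, and define (ã, b̃) = (1,a)·M_x(b₁,b₂)⋯M_x(b_{k−2},b_{k−1}) and (c̃, d̃)ᵀ = M_y(c₁,c₂)⋯M_y(c_{l−1},c_l)·(1,d)ᵀ. Set T₁ = b_k, T₂ = (1/(b₁⋯b_k·c₁⋯c_l)) · (ã,b̃) · [[1 + c₁b_{k−1}, b_k],[b_k, b_k²]] · (c̃,d̃)ᵀ, T₃ = (1/(b₁⋯b_{k−1})) · (ã,b̃)·(1,b_k)ᵀ, and T₄ = (1/(c₁⋯c_l)) · (1,b_k)·(c̃,d̃)ᵀ. Then T₁·T₂ − T₃·T₄ = (ã·c̃·c₁·b_{k−1})/(b₁⋯b_{k−1}·c₁⋯c_l),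 and this equals 1 since ã = b₁⋯b_{k−2} and c̃ = c₂⋯c_l. -/
/-! The middle matrix `N` of `T₂` is the rank-one matrix `(1,b_k)ᵀ(1,b_k)` plus `c₁b_{k-1}` in the
top-left corner, so `(ã,b̃)·N·(c̃,d̃)ᵀ = [(ã,b̃)(1,b_k)ᵀ]·[(1,b_k)(c̃,d̃)ᵀ] + c₁b_{k-1}ãc̃` and the
product terms cancel in `T₁T₂ − T₃T₄`. Since `M_x` is upper and `M_y` lower triangular, `ã` and
`c̃` are the products `b₁⋯b_{k-2}` and `c₂⋯c_l` of the diagonal entries, so the quotient is `1`. -/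

section TriangularProducts

variable {R : Type*} [Semiring R] {m : Type*}

theorem Matrix.mul_list_prod_apply_zero_zero_of_upper (L : List (Matrix (Fin 2) (Fin 2) R))
    (hL : ∀ M ∈ L, M 1 0 = 0) (r : Matrix m (Fin 2) R) (i : m) :
    (r * L.prod) i 0 = r i 0 * (L.map (· 0 0)).prod := by
  induction L generalizing r with
  | nil => simp
  | cons M L ih =>
    rw [List.prod_cons, ← Matrix.mul_assoc, ih (fun N hN => hL N (List.mem_cons_of_mem M hN))]
    simp [Matrix.mul_apply, Fin.sum_univ_two, hL M List.mem_cons_self, mul_assoc]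

theorem Matrix.list_prod_mul_apply_zero_zero_of_lower (L : List (Matrix (Fin 2) (Fin 2) R))
    (hL : ∀ M ∈ L, M 0 1 = 0) (v : Matrix (Fin 2) m R) (j : m) :
    (L.prod * v) 0 j = (L.map (· 0 0)).prod * v 0 j := by
  induction L generalizing v with
  | nil => simp
  | cons M L ih =>
    rw [List.prod_cons, Matrix.mul_assoc]
    simp [Matrix.mul_apply, Fin.sum_univ_two, hL M List.mem_cons_self,
      ← ih (fun N hN => hL N (List.mem_cons_of_mem M hN)), mul_assoc]

end TriangularProducts

theorem List.prod_map_range_eq_prod_range {M : Type*} [CommMonoid M] (f : ℕ → M) (n : ℕ) :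
    ((List.range n).map f).prod = ∏ i ∈ Finset.range n, f i :=
  rfl

theorem Finset.prod_range_succ_eq_prod_Icc {M : Type*} [CommMonoid M] (f : ℕ → M) (n : ℕ) :
    ∏ i ∈ Finset.range n, f (i + 1) = ∏ i ∈ Finset.Icc 1 n, f i := by
  rw [Finset.range_eq_Ico, Finset.prod_Ico_add', zero_add, Finset.Ico_add_one_right_eq_Icc]

theorem Mx_list_prod_apply_zero_zero_mul {K : Type*} [Field K] (a : K) (b : ℕ → K) (n : ℕ) :
    (!![1, a] * ((List.range n).map fun i => Mx (b (i + 1)) (b (i + 2))).prod) 0 0 * b (n + 1) =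
      ∏ i ∈ Finset.Icc 1 (n + 1), b i := by
  rw [Matrix.mul_list_prod_apply_zero_zero_of_upper _ (by simp [Mx]),
    ← Finset.prod_range_succ_eq_prod_Icc, Finset.prod_range_succ]
  simp [Mx, Function.comp_def, List.prod_map_range_eq_prod_range]

theorem My_list_prod_apply_zero_zero_mul {K : Type*} [Field K] (c : ℕ → K) (d : K) (n : ℕ) :
    c 1 * ((((List.range n).map fun i => My (c (i + 1)) (c (i + 2))).prod) * !![(1 : K); d]) 0 0 =
      ∏ i ∈ Finset.Icc 1 (n + 1), c i := by
  rw [Matrix.list_prod_mul_apply_zero_zero_of_lower _ (by simp [My]),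
    ← Finset.prod_range_succ_eq_prod_Icc, Finset.prod_range_succ']
  simp [My, Function.comp_def, List.prod_map_range_eq_prod_range, mul_comm]

theorem Matrix.mul_rankOne_add_corner_mul_apply {R : Type*} [CommRing R] {m n : Type*}
    (r : Matrix m (Fin 2) R) (v : Matrix (Fin 2) n R) (e x : R) (i : m) (j : n) :
    (r * !![1 + e, x; x, x ^ 2] * v) i j =
      (r * !![(1 : R); x]) i 0 * (!![1, x] * v) 0 j + e * r i 0 * v 0 j := by
  simp [Matrix.mul_apply, Fin.sum_univ_two]
  ring

theorem stmt_11 (K : Type*) [Field K] (k l : ℕ) (hk : 2 ≤ k) (hl : 2 ≤ l)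
    (a d : K) (b c : ℕ → K)
    (hb : ∀ i, 1 ≤ i → i ≤ k → b i ≠ 0) (hc : ∀ j, 1 ≤ j → j ≤ l → c j ≠ 0)
    (rowAB : Matrix (Fin 1) (Fin 2) K)
    (hrow : rowAB = !![1, a] *
      ((List.range (k - 2)).map fun i => Mx (b (i + 1)) (b (i + 2))).prod)
    (colCD : Matrix (Fin 2) (Fin 1) K)
    (hcol : colCD =
      (((List.range (l - 1)).map fun i => My (c (i + 1)) (c (i + 2))).prod) * !![(1 : K); d])
    (T₁ T₂ T₃ T₄ : K)
    (hT₁ : T₁ = b k)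
    (hT₂ : T₂ = (1 / ((∏ i ∈ Finset.Icc 1 k, b i) * ∏ j ∈ Finset.Icc 1 l, c j)) *
      ((rowAB * !![1 + c 1 * b (k - 1), b k; b k, (b k) ^ 2] * colCD) 0 0))
    (hT₃ : T₃ = (1 / (∏ i ∈ Finset.Icc 1 (k - 1), b i)) *
      ((rowAB * !![(1 : K); b k]) 0 0))
    (hT₄ : T₄ = (1 / (∏ j ∈ Finset.Icc 1 l, c j)) * ((!![1, b k] * colCD) 0 0)) :
    T₁ * T₂ - T₃ * T₄ =
      (rowAB 0 0 * colCD 0 0 * c 1 * b (k - 1)) /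
        ((∏ i ∈ Finset.Icc 1 (k - 1), b i) * ∏ j ∈ Finset.Icc 1 l, c j) ∧
    T₁ * T₂ - T₃ * T₄ = 1 := by
  have hbk : b k ≠ 0 := hb k (by omega) le_rfl
  have hP : ∏ i ∈ Finset.Icc 1 (k - 1), b i ≠ 0 :=
    Finset.prod_ne_zero_iff.2 fun i hi => hb i (Finset.mem_Icc.1 hi).1 (by grind)
  have hQ : ∏ j ∈ Finset.Icc 1 l, c j ≠ 0 :=
    Finset.prod_ne_zero_iff.2 fun j hj => hc j (Finset.mem_Icc.1 hj).1 (Finset.mem_Icc.1 hj).2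
  have hPk : ∏ i ∈ Finset.Icc 1 k, b i = (∏ i ∈ Finset.Icc 1 (k - 1), b i) * b k := by
    obtain ⟨n, rfl⟩ : ∃ n, k = n + 1 := ⟨k - 1, by omega⟩
    exact Finset.prod_Icc_succ_top (by omega) b
  have hdiff : T₁ * T₂ - T₃ * T₄ =
      (rowAB 0 0 * colCD 0 0 * c 1 * b (k - 1)) /
        ((∏ i ∈ Finset.Icc 1 (k - 1), b i) * ∏ j ∈ Finset.Icc 1 l, c j) := by
    rw [hT₁, hT₂, hT₃, hT₄, Matrix.mul_rankOne_add_corner_mul_apply, hPk]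
    field_simp
    ring
  have hA : rowAB 0 0 * b (k - 1) = ∏ i ∈ Finset.Icc 1 (k - 1), b i := by
    obtain ⟨n, rfl⟩ : ∃ n, k = n + 2 := ⟨k - 2, by omega⟩
    exact hrow ▸ Mx_list_prod_apply_zero_zero_mul a b n
  have hC : c 1 * colCD 0 0 = ∏ j ∈ Finset.Icc 1 l, c j := by
    obtain ⟨n, rfl⟩ : ∃ n, l = n + 1 := ⟨l - 1, by omega⟩
    exact hcol ▸ My_list_prod_apply_zero_zero_mul c d n
  refine ⟨hdiff, ?_⟩
  rw [hdiff, div_eq_one_iff_eq (mul_ne_zero hP hQ), ← hA, ← hC]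
  ring
end
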